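/- For every odd prime power q, the number of points [t : z₀ : z₁ : z₂ : z₃] ∈ Cone_∞(F)(𝔽_q) such that z₀² + z₁² = 0 equals q·(3 + χ(−1)) + 1 + q·(1 + χ(−1))·(1 + (q − 1)(3 + χ(−1))). -/

import Mathlib

/-!
Given `z₀² = -z₁²` we have `z₀⁴ = z₁⁴`, so the cone equation reduces to `z₂⁴ = z₃⁴`. On vectors,
`t` is free and a pair with `x ^ n = a * y ^ n` is either `(0, 0)` or has `y ≠ 0` and `x / y` an
`n`-th root of `a`; there are `1 + χ(-1)` square roots of `-1` and `3 + χ(-1)` fourth roots of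
unity. This gives `q (1 + (q - 1)(1 + χ(-1))) (1 + (q - 1)(3 + χ(-1)))` vector solutions, and
the nonzero ones are `q - 1` per projective point.
-/

open scoped LinearAlgebra.Projectivization

/-- The tangent cone condition on `ℙ⁴` with coordinates `[t : z₀ : z₁ : z₂ : z₃]`:
`z₀⁴ - z₁⁴ + z₂⁴ - z₃⁴ = 0`. -/
def ConeCond {F : Type*} [Field F] (v : Fin 5 → F) : Prop :=
  v 1 ^ 4 - v 2 ^ 4 + v 3 ^ 4 - v 4 ^ 4 = 0

namespace Projectivization

variable {k V : Type*} [DivisionRing k] [AddCommGroup V] [Module k V]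

theorem card_nonzero_subtype (P : V → Prop) (hP : ∀ (a : kˣ) (v : V), P (a • v) ↔ P v) :
    Nat.card {v : V // v ≠ 0 ∧ P v} = Nat.card {p : ℙ k V // P p.rep} * (Nat.card k - 1) := by
  let e := nonZeroEquivProjectivizationProdUnits k V
  have he : ∀ v : {v : V // v ≠ 0}, P v ↔ P (e v).1.rep := fun v => by
    obtain ⟨a, ha⟩ := exists_smul_eq_mk_rep k v.1 v.2
    rw [show (e v).1 = mk k v.1 v.2 from rfl, ← ha, hP]
  calc Nat.card {v : V // v ≠ 0 ∧ P v}
      = Nat.card {x : ℙ k V × kˣ // P x.1.rep} :=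
        Nat.card_congr ((Equiv.subtypeSubtypeEquivSubtypeInter _ P).symm.trans (e.subtypeEquiv he))
    _ = Nat.card {p : ℙ k V // P p.rep} * (Nat.card k - 1) := by
        rw [Nat.card_congr (Equiv.prodSubtypeFstEquivSubtypeProd (p := fun p : ℙ k V => P p.rep)),
          Nat.card_prod, Nat.card_units]

theorem card_subtype_rep [Finite V] (P : V → Prop) (hP : ∀ (a : kˣ) (v : V), P (a • v) ↔ P v)
    (h0 : P 0) :
    Nat.card {v : V // P v} = Nat.card {p : ℙ k V // P p.rep} * (Nat.card k - 1) + 1 := by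
  rw [← card_nonzero_subtype P hP]
  calc Nat.card {v : V // P v} = ({v | P v} \ {0} : Set V).ncard + 1 :=
        (Set.ncard_sdiff_singleton_add_one h0).symm
    _ = Nat.card {v : V // v ≠ 0 ∧ P v} + 1 :=
        congrArg (· + 1) (Nat.card_congr (Equiv.subtypeEquivRight fun _ => and_comm))

end Projectivization

namespace FiniteField

variable {F : Type*} [Field F] [Fintype F] [DecidableEq F]

theorem card_pow_eq_mul_pow {n : ℕ} (hn : n ≠ 0) (a : F) :
    Nat.card {w : F × F // w.1 ^ n = a * w.2 ^ n} =
      (Nat.card F - 1) * Nat.card {u : F // u ^ n = a} + 1 := by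
  have fiber (y : F) : Fintype.card {x : F // x ^ n = a * y ^ n} =
      if y = 0 then 1 else Fintype.card {u : F // u ^ n = a} := by
    split_ifs with hy
    · simp [hy, zero_pow hn, pow_eq_zero_iff hn]
    · refine (Fintype.card_congr (Equiv.subtypeEquiv (Equiv.mulRight₀ y hy) fun u => ?_)).symm
      simp [mul_pow, pow_ne_zero n hy]
  simp only [Nat.card_eq_fintype_card]
  calc Fintype.card {w : F × F // w.1 ^ n = a * w.2 ^ n}
      = ∑ y : F, Fintype.card {x : F // x ^ n = a * y ^ n} := by
        simp only [Fintype.card_subtype, Finset.card_filter, Fintype.sum_prod_type_right]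
    _ = (Fintype.card F - 1) * Fintype.card {u : F // u ^ n = a} + 1 := by
        simp [fiber, Finset.sum_ite, Finset.filter_ne', Finset.filter_eq', add_comm]

theorem card_sq_eq (hF : ringChar F ≠ 2) (a : F) :
    (Nat.card {u : F // u ^ 2 = a} : ℤ) = quadraticChar F a + 1 := by
  rw [← quadraticChar_card_sqrts hF, Nat.card_eq_fintype_card, Fintype.card_subtype,
    Set.toFinset_ofPred]

theorem card_pow_four_eq_one (hF : ringChar F ≠ 2) :
    (Nat.card {u : F // u ^ 4 = 1} : ℤ) = quadraticChar F (-1) + 3 := by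
  have hiff (u : F) : u ^ 4 = 1 ↔ u ^ 2 = 1 ∨ u ^ 2 = -1 := by
    rw [show u ^ 4 = (u ^ 2) ^ 2 by ring, sq_eq_one_iff]
  have hdisj : Disjoint (fun u : F => u ^ 2 = 1) (fun u => u ^ 2 = -1) :=
    Pi.disjoint_iff.2 fun u => Prop.disjoint_iff.2 fun ⟨h1, h2⟩ =>
      Ring.neg_one_ne_one_of_char_ne_two hF (h2.symm.trans h1)
  rw [Nat.card_congr (Equiv.subtypeEquivRight hiff), Nat.card_eq_fintype_card,
    Fintype.card_subtype_or_disjoint _ _ hdisj, ← Nat.card_eq_fintype_card,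
    ← Nat.card_eq_fintype_card]
  push_cast
  rw [card_sq_eq hF, card_sq_eq hF, map_one]
  ring

end FiniteField

def piFinFiveEquiv (α : Type*) : (Fin 5 → α) ≃ ((α × α) × (α × α)) × α where
  toFun v := (((v 1, v 2), (v 3, v 4)), v 0)
  invFun x := ![x.2, x.1.1.1, x.1.1.2, x.1.2.1, x.1.2.2]
  left_inv v := by ext i; fin_cases i <;> rfl
  right_inv _ := rfl

theorem card_pi_fin_five_subtype {α : Type*} (P Q : α × α → Prop) :
    Nat.card {v : Fin 5 → α // P (v 1, v 2) ∧ Q (v 3, v 4)} =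
      Nat.card {w // P w} * Nat.card {w // Q w} * Nat.card α := by
  rw [Nat.card_congr ((piFinFiveEquiv α).subtypeEquiv (p := fun v => P (v 1, v 2) ∧ Q (v 3, v 4))
      (q := fun x => P x.1.1 ∧ Q x.1.2) fun _ => Iff.rfl),
    Nat.card_congr (Equiv.prodSubtypeFstEquivSubtypeProd (p := fun w : (α × α) × (α × α) =>
      P w.1 ∧ Q w.2)), Nat.card_prod,
    Nat.card_congr Equiv.subtypeProdEquivProd, Nat.card_prod]

theorem mul_pow_eq_mul_mul_pow_iff {M₀ : Type*} [CommMonoidWithZero M₀] [IsCancelMulZero M₀]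
    {a : M₀} (ha : a ≠ 0) (n : ℕ) (c x y : M₀) :
    (a * x) ^ n = c * (a * y) ^ n ↔ x ^ n = c * y ^ n := by
  rw [mul_pow, mul_pow, mul_left_comm, mul_right_inj' (pow_ne_zero n ha)]

-- The right side has the shape `x ^ n = a * y ^ n` counted by `FiniteField.card_pow_eq_mul_pow`.
theorem coneCond_and_iff {F : Type*} [Field F] (v : Fin 5 → F) :
    (ConeCond v ∧ v 1 ^ 2 + v 2 ^ 2 = 0) ↔ v 1 ^ 2 = -1 * v 2 ^ 2 ∧ v 3 ^ 4 = 1 * v 4 ^ 4 := by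
  unfold ConeCond
  constructor
  · rintro ⟨hcone, hsum⟩
    exact ⟨by linear_combination hsum, by linear_combination hcone - (v 1 ^ 2 - v 2 ^ 2) * hsum⟩
  · rintro ⟨h12, h34⟩
    exact ⟨by linear_combination (v 1 ^ 2 - v 2 ^ 2) * h12 + h34, by linear_combination h12⟩

theorem cone_z0z1_count (F : Type) [Field F] [Fintype F] [DecidableEq F]
    (hodd : ringChar F ≠ 2) :
    (Nat.card {p : ℙ F (Fin 5 → F) //
        ConeCond p.rep ∧ p.rep 1 ^ 2 + p.rep 2 ^ 2 = 0} : ℤ) =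
      (Fintype.card F : ℤ) * (3 + quadraticChar F (-1)) + 1 +
        (Fintype.card F : ℤ) * (1 + quadraticChar F (-1)) *
          (1 + ((Fintype.card F : ℤ) - 1) * (3 + quadraticChar F (-1))) := by
  let P : (Fin 5 → F) → Prop := fun v => v 1 ^ 2 = -1 * v 2 ^ 2 ∧ v 3 ^ 4 = 1 * v 4 ^ 4
  have hcone : Nat.card {p : ℙ F (Fin 5 → F) // ConeCond p.rep ∧ p.rep 1 ^ 2 + p.rep 2 ^ 2 = 0} =
      Nat.card {p : ℙ F (Fin 5 → F) // P p.rep} :=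
    Nat.card_congr (Equiv.subtypeEquivRight fun p => coneCond_and_iff p.rep)
  have hP : ∀ (a : Fˣ) (v : Fin 5 → F), P (a • v) ↔ P v := fun a v => by
    simp only [P, Pi.smul_apply, Units.smul_def, smul_eq_mul,
      mul_pow_eq_mul_mul_pow_iff a.ne_zero]
  have hcount : Nat.card {w : F × F // w.1 ^ 2 = -1 * w.2 ^ 2} *
      Nat.card {w : F × F // w.1 ^ 4 = 1 * w.2 ^ 4} * Nat.card F =
      Nat.card {p : ℙ F (Fin 5 → F) // P p.rep} * (Nat.card F - 1) + 1 :=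
    (card_pi_fin_five_subtype _ _).symm.trans (Projectivization.card_subtype_rep P hP (by simp [P]))
  have hq : 1 < Nat.card F := Finite.one_lt_card
  rw [FiniteField.card_pow_eq_mul_pow two_ne_zero,
    FiniteField.card_pow_eq_mul_pow four_ne_zero] at hcount
  zify [hq.le] at hcount
  rw [FiniteField.card_sq_eq hodd, FiniteField.card_pow_four_eq_one hodd] at hcount
  rw [hcone, ← Nat.card_eq_fintype_card]
  refine mul_right_cancel₀ (sub_ne_zero.2 (by exact_mod_cast hq.ne') : (Nat.card F : ℤ) - 1 ≠ 0) ?_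
  linear_combination -hcount
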